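/- With ℬ and σ as above, define ε : 𝒢*_{n−1}(F) → ℬ by ε(h_v) = b_v − Σ_{e ∋ v} a'_{e,v}, ε(h_e) = h_e, ε(h_e*) = h_e*, extended multiplicatively. Then ε is a chain map of dg-algebras and σ ∘ ε = id on 𝒢*_{n−1}(F). -/

import Mathlib

/-! The elements `x` of degree `i` such that `ε x` has degree `i` and `ε (d x) = d (ε x)` form a
family of submodules that is closed under the graded multiplication, because both differentials satisfy the
same graded Leibniz rule and `ε` is multiplicative. The generators `h_e`, `h_e*` and the idempotents
are cycles sent to cycles, and `h_v` lies in it because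
`d (b_v - ∑ a'_{e,v}) = ∑ h_e h_e* - ∑ h_e* h_e = ε (d h_v)`: the `d_{e,v}` cancel. Since the
generators generate the algebra, this family exhausts the grading of `𝒢*_{n-1}(F)`. Finally `σ ∘ ε`
is an algebra map fixing every generator (`σ` kills the `a'_{e,v}`), hence the identity. -/

section GradedLeibniz

variable {R A B : Type*} [CommRing R] [Ring A] [Algebra R A] [Ring B] [Algebra R B]

def IsGradedLeibniz (𝒜 : ℤ → Submodule R A) (d : A →ₗ[R] A) : Prop :=
  ∀ (i : ℤ) (x y : A), x ∈ 𝒜 i → d (x * y) = d x * y + (Int.negOnePow i : ℤ) • (x * d y)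

theorem IsGradedLeibniz.map_one {𝒜 : ℤ → Submodule R A} [SetLike.GradedOne 𝒜]
    {d : A →ₗ[R] A} (hd : IsGradedLeibniz 𝒜 d) : d 1 = 0 := by
  have h := hd 0 1 1 SetLike.GradedOne.one_mem
  simpa only [one_mul, mul_one, Int.negOnePow_zero, Units.val_one, one_smul, left_eq_add] using h

def chainLocus (𝒜 : ℤ → Submodule R A) (ℬ : ℤ → Submodule R B) (f : A →ₐ[R] B)
    (dA : A →ₗ[R] A) (dB : B →ₗ[R] B) (i : ℤ) : Submodule R A :=
  𝒜 i ⊓ (ℬ i).comap f.toLinearMap ⊓ LinearMap.ker (f.toLinearMap ∘ₗ dA - dB ∘ₗ f.toLinearMap)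

variable {𝒜 : ℤ → Submodule R A} {ℬ : ℤ → Submodule R B} {f : A →ₐ[R] B}
  {dA : A →ₗ[R] A} {dB : B →ₗ[R] B}

theorem mem_chainLocus {i : ℤ} {x : A} :
    x ∈ chainLocus 𝒜 ℬ f dA dB i ↔ x ∈ 𝒜 i ∧ f x ∈ ℬ i ∧ f (dA x) = dB (f x) := by
  simp [chainLocus, sub_eq_zero, and_assoc]

theorem chainLocus_le (i : ℤ) : chainLocus 𝒜 ℬ f dA dB i ≤ 𝒜 i :=
  inf_le_left.trans inf_le_left

theorem mem_chainLocus_of_cycle {i : ℤ} {x : A} (hx : x ∈ 𝒜 i) (hfx : f x ∈ ℬ i)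
    (hdx : dA x = 0) (hdfx : dB (f x) = 0) : x ∈ chainLocus 𝒜 ℬ f dA dB i :=
  mem_chainLocus.mpr ⟨hx, hfx, by rw [hdx, hdfx, map_zero]⟩

theorem chainLocus_gradedMonoid [SetLike.GradedMonoid 𝒜] [SetLike.GradedMonoid ℬ]
    (hdA : IsGradedLeibniz 𝒜 dA) (hdB : IsGradedLeibniz ℬ dB) :
    SetLike.GradedMonoid (chainLocus 𝒜 ℬ f dA dB) where
  one_mem := mem_chainLocus_of_cycle SetLike.GradedOne.one_mem
    (by rw [map_one]; exact SetLike.GradedOne.one_mem) hdA.map_one (by rw [map_one, hdB.map_one])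
  mul_mem := by
    intro i j x y hx hy
    obtain ⟨hxA, hxB, hxd⟩ := mem_chainLocus.mp hx
    obtain ⟨hyA, hyB, hyd⟩ := mem_chainLocus.mp hy
    refine mem_chainLocus.mpr ⟨SetLike.mul_mem_graded hxA hyA, ?_, ?_⟩
    · rw [map_mul]
      exact SetLike.mul_mem_graded hxB hyB
    · rw [hdA i x y hxA, map_mul, hdB i _ _ hxB, map_add, map_zsmul, map_mul,
        map_mul, hxd, hyd]

theorem chainLocus_eq_of_iSup_eq_top [DirectSum.Decomposition 𝒜]
    (h : ⨆ i, chainLocus 𝒜 ℬ f dA dB i = ⊤) : chainLocus 𝒜 ℬ f dA dB = 𝒜 :=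
  ((DirectSum.Decomposition.isInternal 𝒜).submodule_iSupIndep.le_iff_eq_of_iSup_eq_top h).mp
    chainLocus_le

theorem map_comm_of_iSup_chainLocus_eq_top (h : ⨆ i, chainLocus 𝒜 ℬ f dA dB i = ⊤) (x : A) :
    f (dA x) = dB (f x) :=
  Submodule.iSup_induction _ (motive := fun x => f (dA x) = dB (f x)) (h ▸ Submodule.mem_top)
    (fun _ _ hx => (mem_chainLocus.mp hx).2.2) (by simp only [map_zero])
    (fun _ _ hx hy => by simp only [map_add, hx, hy])

end GradedLeibniz

theorem Submodule.iSup_eq_top_of_adjoin_eq_top {ι R A : Type*} [AddMonoid ι] [CommSemiring R]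
    [Semiring A] [Algebra R A] (Q : ι → Submodule R A) [SetLike.GradedMonoid Q] {S : Set A}
    (hS : Algebra.adjoin R S = ⊤) (hSQ : ∀ x ∈ S, ∃ i, x ∈ Q i) : ⨆ i, Q i = ⊤ := by
  classical
  have hrange : (DirectSum.coeAlgHom Q).range = ⊤ := by
    refine top_unique (hS ▸ Algebra.adjoin_le fun x hx => ?_)
    obtain ⟨i, hi⟩ := hSQ x hx
    exact ⟨DirectSum.of (fun i => Q i) i ⟨x, hi⟩, DirectSum.coeAlgHom_of Q i _⟩
  rw [Submodule.iSup_eq_toSubmodule_range, hrange, Algebra.top_toSubmodule]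

theorem epsilon_is_chain_map_and_sigma_eps_id_general
    {k BB AG : Type*} [Field k] [Ring BB] [Algebra k BB] [Ring AG] [Algebra k AG]
    (ℬ : ℤ → Submodule k BB) [GradedAlgebra ℬ]
    (𝒢 : ℤ → Submodule k AG) [GradedAlgebra 𝒢] (n : ℤ)
    (V E : Type*) [Fintype E] [DecidableEq V]
    (s t : E → V)
    -- the dg-algebra ℬ
    (idemB : V → BB) (b : V → BB) (a1' a2' d1 d2 hB hsB : E → BB)
    (hidemBdeg : ∀ v, idemB v ∈ ℬ 0)
    (hbdeg : ∀ v, b v ∈ ℬ (2 - n))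
    (ha1'deg : ∀ e, a1' e ∈ ℬ (2 - n)) (ha2'deg : ∀ e, a2' e ∈ ℬ (2 - n))
    (hhBdeg : ∀ e, hB e ∈ ℬ 0) (hhsBdeg : ∀ e, hsB e ∈ ℬ (3 - n))
    (dB : BB →ₗ[k] BB)
    (hLeibB : ∀ (i : ℤ) (x y : BB), x ∈ ℬ i →
        dB (x * y) = dB x * y + (Int.negOnePow i : ℤ) • (x * dB y))
    (hdBidem : ∀ v, dB (idemB v) = 0)
    (hdBb : ∀ v, dB (b v) =
        (∑ e ∈ Finset.univ.filter (fun e => s e = v), d1 e) +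
        (∑ e ∈ Finset.univ.filter (fun e => t e = v), d2 e))
    (hdBa1' : ∀ e, dB (a1' e) = d1 e - hB e * hsB e)
    (hdBa2' : ∀ e, dB (a2' e) = d2 e + hsB e * hB e)
    (hdBh : ∀ e, dB (hB e) = 0) (hdBhs : ∀ e, dB (hsB e) = 0)
    -- the (n-1)-dimensional Ginzburg algebra 𝒢*_{n-1}(F)
    (idem : V → AG) (gT : E → AG) (gsT : E → AG) (hT : V → AG)
    (hidemdeg : ∀ v, idem v ∈ 𝒢 0)
    (hgTdeg : ∀ e, gT e ∈ 𝒢 0) (hgsTdeg : ∀ e, gsT e ∈ 𝒢 (3 - n))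
    (hhTdeg : ∀ v, hT v ∈ 𝒢 (2 - n))
    (hgenG : Algebra.adjoin k
        (Set.range idem ∪ Set.range gT ∪ Set.range gsT ∪ Set.range hT) = ⊤)
    (dG : AG →ₗ[k] AG)
    (hLeibG : ∀ (i : ℤ) (x y : AG), x ∈ 𝒢 i →
        dG (x * y) = dG x * y + (Int.negOnePow i : ℤ) • (x * dG y))
    (hdGidem : ∀ v, dG (idem v) = 0)
    (hdGg : ∀ e, dG (gT e) = 0) (hdGgs : ∀ e, dG (gsT e) = 0)
    (hdGh : ∀ v, dG (hT v) =
        (∑ e ∈ Finset.univ.filter (fun e => s e = v), gT e * gsT e) -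
        (∑ e ∈ Finset.univ.filter (fun e => t e = v), gsT e * gT e))
    -- the map σ : ℬ → 𝒢*_{n-1}(F), determined by its values on generators
    (σ : BB →ₐ[k] AG)
    (hσidem : ∀ v, σ (idemB v) = idem v)
    (hσb : ∀ v, σ (b v) = hT v)
    (hσa1' : ∀ e, σ (a1' e) = 0) (hσa2' : ∀ e, σ (a2' e) = 0)
    (hσh : ∀ e, σ (hB e) = gT e) (hσhs : ∀ e, σ (hsB e) = gsT e)
    -- the map ε : 𝒢*_{n-1}(F) → ℬ, determined by its values on generators
    (ε : AG →ₐ[k] BB)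
    (hεidem : ∀ v, ε (idem v) = idemB v)
    (hεh : ∀ v, ε (hT v) = b v -
        ((∑ e ∈ Finset.univ.filter (fun e => s e = v), a1' e) +
         (∑ e ∈ Finset.univ.filter (fun e => t e = v), a2' e)))
    (hεg : ∀ e, ε (gT e) = hB e) (hεgs : ∀ e, ε (gsT e) = hsB e)
    :
    (∀ i : ℤ, ∀ x ∈ 𝒢 i, ε x ∈ ℬ i) ∧ (∀ x : AG, ε (dG x) = dB (ε x)) ∧
      (∀ x : AG, σ (ε x) = x) := by
  set Q := chainLocus 𝒢 ℬ ε dG dB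
  have : SetLike.GradedMonoid Q := chainLocus_gradedMonoid hLeibG hLeibB
  have hεdhT : ∀ v, ε (dG (hT v)) = dB (ε (hT v)) := by
    intro v
    simp only [hdGh, hεh, map_sub, map_add, map_sum, map_mul, hεg, hεgs, hdBb, hdBa1', hdBa2',
      Finset.sum_sub_distrib, Finset.sum_add_distrib]
    abel
  have hgen : ∀ x ∈ Set.range idem ∪ Set.range gT ∪ Set.range gsT ∪ Set.range hT,
      ∃ i, x ∈ Q i := by
    rintro _ (((⟨v, rfl⟩ | ⟨e, rfl⟩) | ⟨e, rfl⟩) | ⟨v, rfl⟩)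
    · exact ⟨0, mem_chainLocus_of_cycle (hidemdeg v) (hεidem v ▸ hidemBdeg v) (hdGidem v)
        (hεidem v ▸ hdBidem v)⟩
    · exact ⟨0, mem_chainLocus_of_cycle (hgTdeg e) (hεg e ▸ hhBdeg e) (hdGg e) (hεg e ▸ hdBh e)⟩
    · exact ⟨3 - n, mem_chainLocus_of_cycle (hgsTdeg e) (hεgs e ▸ hhsBdeg e) (hdGgs e)
        (hεgs e ▸ hdBhs e)⟩
    · refine ⟨2 - n, mem_chainLocus.mpr ⟨hhTdeg v, ?_, hεdhT v⟩⟩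
      rw [hεh]
      exact sub_mem (hbdeg v) (add_mem (sum_mem fun e _ => ha1'deg e) (sum_mem fun e _ => ha2'deg e))
  have htop : ⨆ i, Q i = ⊤ := Submodule.iSup_eq_top_of_adjoin_eq_top Q hgenG hgen
  have hσε : σ.comp ε = AlgHom.id k AG := by
    refine AlgHom.ext_of_adjoin_eq_top hgenG ?_
    rintro _ (((⟨v, rfl⟩ | ⟨e, rfl⟩) | ⟨e, rfl⟩) | ⟨v, rfl⟩)
    all_goals simp [hεidem, hσidem, hεg, hσh, hεgs, hσhs, hεh, hσb, hσa1', hσa2']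
  refine ⟨fun i x hx => ?_, map_comm_of_iSup_chainLocus_eq_top htop, AlgHom.congr_fun hσε⟩
  rw [← chainLocus_eq_of_iSup_eq_top htop] at hx
  exact (mem_chainLocus.mp hx).2.1

/-- With `ℬ` and `σ` as in Statement 6, the algebra map
`ε : 𝒢*_{n-1}(F) → ℬ` determined by `ε(h_v) = b_v − ∑_{e ∋ v} a'_{e,v}`, `ε(h_e) = h_e`,
`ε(h_e*) = h_e*` is a chain map of dg-algebras, and `σ ∘ ε = id` on `𝒢*_{n-1}(F)`. -/
theorem epsilon_is_chain_map_and_sigma_eps_id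
    {k BB AG : Type*} [Field k] [Ring BB] [Algebra k BB] [Ring AG] [Algebra k AG]
    (ℬ : ℤ → Submodule k BB) [GradedAlgebra ℬ]
    (𝒢 : ℤ → Submodule k AG) [GradedAlgebra 𝒢] (n : ℤ)
    (V E : Type*) [Fintype E] [DecidableEq V]
    (s t : E → V)
    -- the dg-algebra ℬ
    (idemB : V → BB) (b : V → BB) (a1' a2' d1 d2 hB hsB : E → BB)
    (hidemBdeg : ∀ v, idemB v ∈ ℬ 0)
    (hbdeg : ∀ v, b v ∈ ℬ (2 - n))
    (ha1'deg : ∀ e, a1' e ∈ ℬ (2 - n)) (ha2'deg : ∀ e, a2' e ∈ ℬ (2 - n))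
    (hd1deg : ∀ e, d1 e ∈ ℬ (3 - n)) (hd2deg : ∀ e, d2 e ∈ ℬ (3 - n))
    (hhBdeg : ∀ e, hB e ∈ ℬ 0) (hhsBdeg : ∀ e, hsB e ∈ ℬ (3 - n))
    (hgenB : Algebra.adjoin k
        (Set.range idemB ∪ Set.range b ∪ Set.range a1' ∪ Set.range a2' ∪
          Set.range d1 ∪ Set.range d2 ∪ Set.range hB ∪ Set.range hsB) = ⊤)
    (dB : BB →ₗ[k] BB)
    (hdBDeg : ∀ i : ℤ, ∀ x ∈ ℬ i, dB x ∈ ℬ (i + 1))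
    (hLeibB : ∀ (i : ℤ) (x y : BB), x ∈ ℬ i →
        dB (x * y) = dB x * y + (Int.negOnePow i : ℤ) • (x * dB y))
    (hdBidem : ∀ v, dB (idemB v) = 0)
    (hdBb : ∀ v, dB (b v) =
        (∑ e ∈ Finset.univ.filter (fun e => s e = v), d1 e) +
        (∑ e ∈ Finset.univ.filter (fun e => t e = v), d2 e))
    (hdBa1' : ∀ e, dB (a1' e) = d1 e - hB e * hsB e)
    (hdBa2' : ∀ e, dB (a2' e) = d2 e + hsB e * hB e)
    (hdBd1 : ∀ e, dB (d1 e) = 0) (hdBd2 : ∀ e, dB (d2 e) = 0)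
    (hdBh : ∀ e, dB (hB e) = 0) (hdBhs : ∀ e, dB (hsB e) = 0)
    -- the (n-1)-dimensional Ginzburg algebra 𝒢*_{n-1}(F)
    (idem : V → AG) (gT : E → AG) (gsT : E → AG) (hT : V → AG)
    (hidemdeg : ∀ v, idem v ∈ 𝒢 0)
    (hgTdeg : ∀ e, gT e ∈ 𝒢 0) (hgsTdeg : ∀ e, gsT e ∈ 𝒢 (3 - n))
    (hhTdeg : ∀ v, hT v ∈ 𝒢 (2 - n))
    (hgenG : Algebra.adjoin k
        (Set.range idem ∪ Set.range gT ∪ Set.range gsT ∪ Set.range hT) = ⊤)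
    (dG : AG →ₗ[k] AG)
    (hdGDeg : ∀ i : ℤ, ∀ x ∈ 𝒢 i, dG x ∈ 𝒢 (i + 1))
    (hLeibG : ∀ (i : ℤ) (x y : AG), x ∈ 𝒢 i →
        dG (x * y) = dG x * y + (Int.negOnePow i : ℤ) • (x * dG y))
    (hdGidem : ∀ v, dG (idem v) = 0)
    (hdGg : ∀ e, dG (gT e) = 0) (hdGgs : ∀ e, dG (gsT e) = 0)
    (hdGh : ∀ v, dG (hT v) =
        (∑ e ∈ Finset.univ.filter (fun e => s e = v), gT e * gsT e) -
        (∑ e ∈ Finset.univ.filter (fun e => t e = v), gsT e * gT e))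
    -- the map σ : ℬ → 𝒢*_{n-1}(F), determined by its values on generators
    (σ : BB →ₐ[k] AG)
    (hσidem : ∀ v, σ (idemB v) = idem v)
    (hσb : ∀ v, σ (b v) = hT v)
    (hσa1' : ∀ e, σ (a1' e) = 0) (hσa2' : ∀ e, σ (a2' e) = 0)
    (hσd1 : ∀ e, σ (d1 e) = gT e * gsT e)
    (hσd2 : ∀ e, σ (d2 e) = -(gsT e * gT e))
    (hσh : ∀ e, σ (hB e) = gT e) (hσhs : ∀ e, σ (hsB e) = gsT e)
    -- the map ε : 𝒢*_{n-1}(F) → ℬ, determined by its values on generators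
    (ε : AG →ₐ[k] BB)
    (hεidem : ∀ v, ε (idem v) = idemB v)
    (hεh : ∀ v, ε (hT v) = b v -
        ((∑ e ∈ Finset.univ.filter (fun e => s e = v), a1' e) +
         (∑ e ∈ Finset.univ.filter (fun e => t e = v), a2' e)))
    (hεg : ∀ e, ε (gT e) = hB e) (hεgs : ∀ e, ε (gsT e) = hsB e)
    :
    (∀ i : ℤ, ∀ x ∈ 𝒢 i, ε x ∈ ℬ i) ∧ (∀ x : AG, ε (dG x) = dB (ε x)) ∧
      (∀ x : AG, σ (ε x) = x) :=
  epsilon_is_chain_map_and_sigma_eps_id_general ℬ 𝒢 n V E s t idemB b a1' a2' d1 d2 hB hsB hidemBdeg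
    hbdeg ha1'deg ha2'deg hhBdeg hhsBdeg dB hLeibB hdBidem hdBb hdBa1' hdBa2' hdBh hdBhs idem gT gsT
    hT hidemdeg hgTdeg hgsTdeg hhTdeg hgenG dG hLeibG hdGidem hdGg hdGgs hdGh σ hσidem hσb hσa1'
    hσa2' hσh hσhs ε hεidem hεh hεg hεgs
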